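/- arXiv:1108.2533 — 6 statements merged into one kernel-verified Lean document; each statement's English description precedes it below -/
import Mathlib

section
/- Let X be a homogeneous topological space. Then X is a Baire space if and only if X is not meager in itself. -/
open Set

lemma IsNowhereDense.isMeagre' {X : Type*} [TopologicalSpace X] {s : Set X}
    (h : IsNowhereDense s) : IsMeagre s :=
  isMeagre_iff_countable_union_isNowhereDense.mpr
    ⟨{s}, by simpa using h, countable_singleton s, by simp⟩

/-- Banach category theorem (weak form): if every point has a meagre open
neighborhood, then the whole space is meagre. -/
lemma banach_category_univ {X : Type*} [TopologicalSpace X]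
    (h : ∀ x : X, ∃ U : Set X, IsOpen U ∧ x ∈ U ∧ IsMeagre U) :
    IsMeagre (Set.univ : Set X) := by
  classical
  -- Zorn: maximal pairwise disjoint family of nonempty open meagre sets
  set S : Set (Set (Set X)) :=
    {T | (∀ U ∈ T, IsOpen U ∧ IsMeagre U ∧ U.Nonempty) ∧ T.PairwiseDisjoint id} with hS
  obtain ⟨T, hTmax⟩ : ∃ T, Maximal (· ∈ S) T := by
    apply zorn_subset
    intro c hc hchain
    refine ⟨⋃₀ c, ⟨?_, ?_⟩, fun s hs => subset_sUnion_of_mem hs⟩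
    · rintro U ⟨t, htc, hUt⟩
      exact (hc htc).1 U hUt
    · rintro U ⟨t, htc, hUt⟩ V ⟨t', ht'c, hVt'⟩ hUV
      rcases hchain.total htc ht'c with hsub | hsub
      · exact (hc ht'c).2 (hsub hUt) hVt' hUV
      · exact (hc htc).2 hUt (hsub hVt') hUV
  obtain ⟨hT1, hT2⟩ := hTmax.1
  set W : Set X := ⋃₀ T with hW
  have hWopen : IsOpen W := isOpen_sUnion fun U hU => (hT1 U hU).1
  -- W is dense
  have hWdense : Dense W := by
    rw [dense_iff_inter_open]
    intro O hO hOne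
    by_contra hemp
    rw [not_nonempty_iff_eq_empty] at hemp
    obtain ⟨x, hxO⟩ := hOne
    obtain ⟨V, hVo, hxV, hVm⟩ := h x
    have hmem : insert (O ∩ V) T ∈ S := by
      constructor
      · rintro U (rfl | hU)
        · exact ⟨hO.inter hVo, hVm.mono inter_subset_right, ⟨x, hxO, hxV⟩⟩
        · exact hT1 U hU
      · intro U hU U' hU' hne
        rcases hU with rfl | hU
        · rcases hU' with rfl | hU'
          · exact absurd rfl hne
          · refine Set.disjoint_left.mpr fun z hz hz' => ?_
            have : z ∈ O ∩ W := ⟨hz.1, U', hU', hz'⟩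
            simp [hemp] at this
        · rcases hU' with rfl | hU'
          · refine Set.disjoint_left.mpr fun z hz hz' => ?_
            have : z ∈ O ∩ W := ⟨hz'.1, U, hU, hz⟩
            simp [hemp] at this
          · exact hT2 hU hU' hne
    have : insert (O ∩ V) T = T := hTmax.eq_of_subset hmem (subset_insert _ _) |>.symm
    have hOVT : O ∩ V ∈ T := this ▸ mem_insert _ _
    have : x ∈ O ∩ W := ⟨hxO, O ∩ V, hOVT, hxO, hxV⟩
    simp [hemp] at this
  -- choose nowhere dense covers of each element of T
  have hcov : ∀ U ∈ T, ∃ f : ℕ → Set X, (∀ n, IsNowhereDense (f n)) ∧ U ⊆ ⋃ n, f n := by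
    intro U hU
    obtain ⟨𝒮, h𝒮nd, h𝒮c, h𝒮sub⟩ :=
      isMeagre_iff_countable_union_isNowhereDense.mp (hT1 U hU).2.1
    obtain ⟨f, hf⟩ := (h𝒮c.insert ∅).exists_eq_range (insert_nonempty _ _)
    refine ⟨f, fun n => ?_, fun x hx => ?_⟩
    · have : f n ∈ insert ∅ 𝒮 := hf ▸ mem_range_self n
      rcases this with h0 | hmem
      · rw [h0]; exact isNowhereDense_empty
      · exact h𝒮nd _ hmem
    · obtain ⟨t, ht, hxt⟩ := h𝒮sub hx
      have : t ∈ insert ∅ 𝒮 := mem_insert_of_mem _ ht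
      rw [hf] at this
      obtain ⟨n, rfl⟩ := this
      exact mem_iUnion.mpr ⟨n, hxt⟩
  choose! g hg1 hg2 using hcov
  -- the n-th slices
  set G : ℕ → Set X := fun n => ⋃ U ∈ T, (g U n ∩ U) with hG
  have hGnd : ∀ n, IsNowhereDense (G n) := by
    intro n
    rw [IsNowhereDense]
    by_contra hne
    have hOne : (interior (closure (G n))).Nonempty := nonempty_iff_ne_empty.mpr hne
    set O : Set X := interior (closure (G n)) with hO
    obtain ⟨y, hyO, hyW⟩ := dense_iff_inter_open.mp hWdense O isOpen_interior hOne
    obtain ⟨U₀, hU₀T, hyU₀⟩ := hyW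
    have hU₀o : IsOpen U₀ := (hT1 U₀ hU₀T).1
    -- O ∩ U₀ is a nonempty open set inside closure (g U₀ n)
    have hsub : O ∩ U₀ ⊆ closure (g U₀ n) := by
      intro z hz
      rw [mem_closure_iff]
      intro P hP hzP
      have hz' : z ∈ closure (G n) := interior_subset hz.1
      have : ((P ∩ U₀) ∩ G n).Nonempty := by
        rw [mem_closure_iff] at hz'
        exact hz' (P ∩ U₀) (hP.inter hU₀o) ⟨hzP, hz.2⟩
      obtain ⟨w, ⟨hwP, hwU₀⟩, hwG⟩ := this
      simp only [hG, mem_iUnion] at hwG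
      obtain ⟨U, hUT, hwg, hwU⟩ := hwG
      have hUeq : U = U₀ := by
        by_contra hne'
        exact (hT2 hUT hU₀T hne').le_bot ⟨hwU, hwU₀⟩
      exact ⟨w, hwP, hUeq ▸ hwg⟩
    have : O ∩ U₀ ⊆ interior (closure (g U₀ n)) :=
      (isOpen_interior.inter hU₀o).subset_interior_iff.mpr hsub
    rw [hg1 U₀ hU₀T n] at this
    exact absurd (this ⟨hyO, hyU₀⟩) (notMem_empty y)
  -- Wᶜ is nowhere dense
  have hWc : IsNowhereDense Wᶜ := by
    rw [IsClosed.isNowhereDense_iff hWopen.isClosed_compl, interior_compl,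
      hWdense.closure_eq, compl_univ]
  -- conclude
  have hcover : (Set.univ : Set X) ⊆ (⋃ n, G n) ∪ Wᶜ := by
    intro x _
    by_cases hx : x ∈ W
    · obtain ⟨U, hUT, hxU⟩ := hx
      obtain ⟨n, hn⟩ := mem_iUnion.mp (hg2 U hUT hxU)
      exact Or.inl (mem_iUnion.mpr ⟨n, mem_iUnion₂.mpr ⟨U, hUT, hn, hxU⟩⟩)
    · exact Or.inr hx
  have hm1 : IsMeagre (⋃ n, G n) := isMeagre_iUnion fun n => (hGnd n).isMeagre'
  have hm2 : IsMeagre ((⋃ n, G n) ∪ Wᶜ) := by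
    rw [IsMeagre, compl_union]
    exact Filter.inter_mem hm1 hWc.isMeagre'
  exact hm2.mono hcover

theorem homogeneous_baire_iff_not_meager_in_itself (X : Type*) [TopologicalSpace X]
    [Nonempty X] (hhom : ∀ x y : X, ∃ h : X ≃ₜ X, h x = y) :
    BaireSpace X ↔ ¬ IsMeagre (Set.univ : Set X) := by
  constructor
  · intro hB hM
    rw [IsMeagre, compl_univ] at hM
    exact absurd (dense_of_mem_residual hM).nonempty (by simp)
  · intro hM
    constructor
    intro f ho hd
    by_contra hnd
    rw [dense_iff_inter_open] at hnd
    push_neg at hnd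
    obtain ⟨V, hVo, hVne, hVint⟩ := hnd
    -- V is meagre
    have hVm : IsMeagre V := by
      have hsub : V ⊆ ⋃ n, (f n)ᶜ := by
        intro x hx
        by_contra hxc
        simp only [mem_iUnion, mem_compl_iff, not_exists, not_not] at hxc
        have : x ∈ V ∩ ⋂ n, f n := ⟨hx, mem_iInter.mpr hxc⟩
        simp [hVint] at this
      refine (isMeagre_iUnion fun n => ?_).mono hsub
      refine IsNowhereDense.isMeagre' ?_
      rw [IsClosed.isNowhereDense_iff (ho n).isClosed_compl, interior_compl,
        (hd n).closure_eq, compl_univ]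
    -- every point has meagre open nbhd
    apply hM
    apply banach_category_univ
    intro x
    obtain ⟨v, hv⟩ := hVne
    obtain ⟨e, he⟩ := hhom v x
    refine ⟨e.symm ⁻¹' V, e.symm.isOpen_preimage.mpr hVo, ?_, ?_⟩
    · simp only [mem_preimage]
      rw [← he, Homeomorph.symm_apply_apply]
      exact hv
    · exact hVm.preimage_of_isOpenMap e.symm.continuous e.symm.isOpenMap
end

section
/- Every ultrafilter U on ω, viewed as a subspace of 2^ω, is a Baire space. -/
/-! Coordinatewise `xor` with `a ⊕ b` preserves `U` and sends `a` to `b`, so `U` is a homogeneous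
second-countable space. Were some nonempty open subset of `U` meagre, its translates would cover
`U` by countably many meagre basic open sets, making `U` meagre in itself and hence in `2^ℕ`.
Complementation `x ↦ ¬x` maps `U` onto `2^ℕ \ U`, so `2^ℕ` itself would be meagre, contradicting
the Baire category theorem. -/

open Set Filter TopologicalSpace

def toCantorSet (U : Ultrafilter ℕ) : Set (ℕ → Bool) :=
  {x | {n | x n = true} ∈ U}

section Meagre

variable {X : Type*} [TopologicalSpace X]

theorem BaireSpace.of_forall_not_isMeagre_of_isOpen
    (h : ∀ s : Set X, IsOpen s → s.Nonempty → ¬IsMeagre s) : BaireSpace X := by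
  refine ⟨fun f hfo hfd => dense_iff_inter_open.mpr fun W hWo hWne => ?_⟩
  by_contra hW
  have hmeagre : IsMeagre (⋂ n, f n)ᶜ := by
    rw [IsMeagre, compl_compl]
    exact countable_iInter_mem.mpr fun n => residual_of_dense_open (hfo n) (hfd n)
  refine h W hWo hWne (hmeagre.mono ?_)
  rw [subset_compl_iff_disjoint_right, disjoint_iff_inter_eq_empty]
  exact not_nonempty_iff_eq_empty.mp hW

theorem isMeagre_univ_of_isMeagre_of_isOpen [SecondCountableTopology X]
    (hX : ∀ x y : X, ∃ e : X ≃ₜ X, e x = y) {W : Set X} (hWo : IsOpen W) (hWne : W.Nonempty)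
    (hW : IsMeagre W) : IsMeagre (univ : Set X) := by
  obtain ⟨w, hw⟩ := hWne
  let B := {b ∈ countableBasis X | IsMeagre b}
  have hcover : univ ⊆ ⋃ b ∈ B, b := by
    intro z _
    obtain ⟨e, rfl⟩ := hX w z
    obtain ⟨b, hbB, hzb, hbW⟩ := (isBasis_countableBasis X).exists_subset_of_mem_open
      (mem_image_of_mem e hw) (e.isOpen_image.mpr hWo)
    exact mem_biUnion ⟨hbB, (e.isInducing.isMeagre_image hW).mono hbW⟩ hzb
  exact (isMeagre_biUnion ((countable_countableBasis X).mono (sep_subset _ _))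
    fun b hb => hb.2).mono hcover

theorem not_isMeagre_of_preimage_eq_compl [BaireSpace X] [Nonempty X] (e : X ≃ₜ X)
    {s : Set X} (he : e ⁻¹' s = sᶜ) : ¬IsMeagre s := by
  intro hs
  have hsc : IsMeagre sᶜ := he ▸ hs.preimage_of_isOpenMap e.continuous e.isOpenMap
  exact not_isMeagre_of_isOpen isOpen_univ univ_nonempty (by simpa using hs.union hsc)

end Meagre

def xorHomeo {ι : Type*} (c : ι → Bool) : (ι → Bool) ≃ₜ (ι → Bool) where
  toFun x i := xor (c i) (x i)
  invFun x i := xor (c i) (x i)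
  left_inv x := by funext i; simp
  right_inv x := by funext i; simp
  continuous_toFun := continuous_pi fun i =>
    (continuous_of_discreteTopology (f := fun v => xor (c i) v)).comp (continuous_apply i)
  continuous_invFun := continuous_pi fun i =>
    (continuous_of_discreteTopology (f := fun v => xor (c i) v)).comp (continuous_apply i)

@[simp]
lemma xorHomeo_apply {ι : Type*} (c x : ι → Bool) (i : ι) :
    xorHomeo c x i = xor (c i) (x i) :=
  rfl

@[simp]
lemma xorHomeo_xorHomeo {ι : Type*} (c x : ι → Bool) : xorHomeo c (xorHomeo c x) = x :=
  (xorHomeo c).symm_apply_apply x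

section Ultrafilter

variable (U : Ultrafilter ℕ)

lemma xorHomeo_mem_toCantorSet {a b x : ℕ → Bool} (ha : a ∈ toCantorSet U)
    (hb : b ∈ toCantorSet U) (hx : x ∈ toCantorSet U) :
    xorHomeo (fun n => xor (a n) (b n)) x ∈ toCantorSet U := by
  refine mem_of_superset (inter_mem (inter_mem ha hb) hx) ?_
  rintro n ⟨⟨han, hbn⟩, hxn⟩
  simp_all

lemma toCantorSet_homogeneous (a b : toCantorSet U) :
    ∃ e : toCantorSet U ≃ₜ toCantorSet U, e a = b := by
  let e := xorHomeo fun n => xor (a.1 n) (b.1 n)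
  have he : ∀ x, x ∈ toCantorSet U ↔ e x ∈ toCantorSet U := fun x =>
    ⟨xorHomeo_mem_toCantorSet U a.2 b.2, fun hx => by
      simpa [e] using xorHomeo_mem_toCantorSet U a.2 b.2 hx⟩
  exact ⟨e.subtype he, Subtype.ext <| funext fun n => by simp [e, Bool.xor_comm]⟩

lemma xorHomeo_true_preimage_toCantorSet :
    xorHomeo (fun _ => true) ⁻¹' toCantorSet U = (toCantorSet U)ᶜ := by
  ext x
  simp [toCantorSet, ← Ultrafilter.compl_mem_iff_notMem, compl_ofPred]

end Ultrafilter

theorem ultrafilter_is_baire_space (U : Ultrafilter ℕ) :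
    BaireSpace ↥(toCantorSet U) := by
  refine BaireSpace.of_forall_not_isMeagre_of_isOpen fun W hWo hWne hW => ?_
  have hU : IsMeagre (univ : Set (toCantorSet U)) :=
    isMeagre_univ_of_isMeagre_of_isOpen (toCantorSet_homogeneous U) hWo hWne hW
  refine not_isMeagre_of_preimage_eq_compl _ (xorHomeo_true_preimage_toCantorSet U) ?_
  simpa using hU.image_val
end

section
/- There exists a perfect subset P of 2^ω that is an independent family of subsets of ω, i.e., for every finite set τ of distinct elements of P and every function w : τ → 2, the set ⋂_{x∈τ} x^{w(x)} is infinite, where x^1 = x and x^0 = ω \ x. -/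
noncomputable section PerfectIndep

/-- Enumeration of pairs (level, finite set of binary strings). -/
noncomputable def piE : ℕ ≃ ℕ × Finset (List Bool) :=
  Classical.choice nonempty_equiv_of_countable

/-- Restriction of `x : ℕ → Bool` to a finite string of length `ℓ`. -/
def piRestr (ℓ : ℕ) (x : ℕ → Bool) : List Bool := List.ofFn (fun i : Fin ℓ => x i)

/-- The embedding giving a perfect independent family. -/
noncomputable def piF (x : ℕ → Bool) (n : ℕ) : Bool :=
  decide (piRestr (piE n).1 x ∈ (piE n).2)

lemma piF_apply (x : ℕ → Bool) (ℓ : ℕ) (F : Finset (List Bool)) :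
    piF x (piE.symm (ℓ, F)) = decide (piRestr ℓ x ∈ F) := by
  simp [piF]

lemma piRestr_eq_iff {ℓ : ℕ} {x y : ℕ → Bool} :
    piRestr ℓ x = piRestr ℓ y ↔ ∀ i < ℓ, x i = y i := by
  constructor
  · intro h i hi
    have := List.ofFn_injective h
    exact congr_fun this ⟨i, hi⟩
  · intro h
    simp only [piRestr]
    congr 1
    funext i
    exact h i i.2

lemma piF_injective : Function.Injective piF := by
  intro x y hxy
  by_contra hne
  have : ∃ m, x m ≠ y m := by
    by_contra h
    push_neg at h
    exact hne (funext h)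
  obtain ⟨m, hm⟩ := this
  set n := piE.symm (m + 1, {piRestr (m + 1) x}) with hn
  have h1 : piF x n = true := by
    rw [hn, piF_apply]; simp
  have h2 : piF y n = false := by
    rw [hn, piF_apply]
    simp only [Finset.mem_singleton, decide_eq_false_iff_not]
    intro h
    exact hm ((piRestr_eq_iff.mp h.symm) m (Nat.lt_succ_self m))
  rw [hxy] at h1; rw [h1] at h2; exact Bool.noConfusion h2

lemma piF_continuous : Continuous piF := by
  apply continuous_pi
  intro n
  have : (fun x => piF x n) =
      (fun v : Fin (piE n).1 → Bool => decide (List.ofFn v ∈ (piE n).2)) ∘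
        (fun x (i : Fin (piE n).1) => x (i : ℕ)) := rfl
  rw [this]
  exact (continuous_of_discreteTopology).comp
    (continuous_pi fun i => continuous_apply (i : ℕ))

end PerfectIndep

/-- There is a perfect subset of `2^ω` that is an independent family: for every
finite `τ ⊆ P` and every assignment `w` of values, the set of coordinates on which
each `x ∈ τ` takes value `w x` is infinite. -/
theorem exists_perfect_independent_family :
    ∃ P : Set (ℕ → Bool), P.Nonempty ∧ Perfect P ∧
      ∀ τ : Finset (ℕ → Bool), ↑τ ⊆ P → ∀ w : (ℕ → Bool) → Bool,
        {n : ℕ | ∀ x ∈ τ, x n = w x}.Infinite := by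
  refine ⟨Set.range piF, Set.range_nonempty _, ⟨?_, ?_⟩, ?_⟩
  · exact (piF_continuous.isClosedEmbedding piF_injective).isClosed_range
  · -- no isolated points
    rintro p ⟨y, rfl⟩
    rw [accPt_iff_nhds]
    intro U hU
    have hU' : piF ⁻¹' U ∈ nhds y := piF_continuous.continuousAt.preimage_mem_nhds hU
    -- the sequence flipping the k-th coordinate tends to y
    set z : ℕ → (ℕ → Bool) := fun k m => if m = k then ! y m else y m with hz
    have htend : Filter.Tendsto z Filter.atTop (nhds y) := by
      rw [tendsto_pi_nhds]
      intro m
      apply Filter.Tendsto.congr' (f₁ := fun _ => y m) _ tendsto_const_nhds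
      filter_upwards [Filter.eventually_gt_atTop m] with k hk
      simp [hz, Nat.ne_of_lt hk]
    have : ∀ᶠ k in Filter.atTop, z k ∈ piF ⁻¹' U := htend.eventually_mem hU'
    obtain ⟨k, hk⟩ := this.exists
    refine ⟨piF (z k), ⟨hk, ⟨z k, rfl⟩⟩, ?_⟩
    intro h
    have := piF_injective h
    have : z k k = y k := congr_fun this k
    simp [hz] at this
  · intro τ hτ w
    -- choose preimages
    set g : (ℕ → Bool) → (ℕ → Bool) := fun x => Function.invFun piF x with hg
    have hgf : ∀ x ∈ τ, piF (g x) = x := by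
      intro x hx
      exact Function.invFun_eq (hτ hx)
    have hginj : ∀ x ∈ τ, ∀ x' ∈ τ, g x = g x' → x = x' := by
      intro x hx x' hx' h
      rw [← hgf x hx, ← hgf x' hx', h]
    -- choose a level ℓ₀ beyond which restrictions of g x, x ∈ τ, are distinct
    have hsep : ∀ x ∈ τ, ∀ x' ∈ τ, x ≠ x' → ∃ m, g x m ≠ g x' m := by
      intro x hx x' hx' hne
      by_contra h
      push_neg at h
      exact hne (hginj x hx x' hx' (funext h))
    classical
    set ℓ₀ : ℕ := (τ ×ˢ τ).sup (fun p =>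
      if h : p.1 ∈ τ ∧ p.2 ∈ τ ∧ p.1 ≠ p.2 then
        Nat.find (hsep p.1 h.1 p.2 h.2.1 h.2.2) + 1 else 0) with hℓ₀
    have hres : ∀ ℓ ≥ ℓ₀, ∀ x ∈ τ, ∀ x' ∈ τ,
        piRestr ℓ (g x) = piRestr ℓ (g x') → x = x' := by
      intro ℓ hℓ x hx x' hx' heq
      by_contra hne
      have hmem : (x, x') ∈ τ ×ˢ τ := Finset.mem_product.mpr ⟨hx, hx'⟩
      have hle : (if h : x ∈ τ ∧ x' ∈ τ ∧ x ≠ x' then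
          Nat.find (hsep x h.1 x' h.2.1 h.2.2) + 1 else 0) ≤ ℓ₀ :=
        Finset.le_sup (f := fun p =>
          if h : p.1 ∈ τ ∧ p.2 ∈ τ ∧ p.1 ≠ p.2 then
            Nat.find (hsep p.1 h.1 p.2 h.2.1 h.2.2) + 1 else 0) hmem
      rw [dif_pos ⟨hx, hx', hne⟩] at hle
      set m := Nat.find (hsep x hx x' hx' hne) with hm
      have hspec : g x m ≠ g x' m := Nat.find_spec (hsep x hx x' hx' hne)
      have hmlt : m < ℓ := lt_of_lt_of_le (Nat.lt_of_succ_le hle) hℓ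
      exact hspec (piRestr_eq_iff.mp heq m hmlt)
    -- the witnessing indices
    set F : ℕ → Finset (List Bool) := fun ℓ =>
      (τ.filter (fun x => w x = true)).image (fun x => piRestr ℓ (g x)) with hF
    have hmem : ∀ ℓ, piE.symm (ℓ₀ + ℓ, F (ℓ₀ + ℓ)) ∈ {n : ℕ | ∀ x ∈ τ, x n = w x} := by
      intro ℓ
      intro x hx
      have hx' : x (piE.symm (ℓ₀ + ℓ, F (ℓ₀ + ℓ))) =
          piF (g x) (piE.symm (ℓ₀ + ℓ, F (ℓ₀ + ℓ))) := by rw [hgf x hx]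
      rw [hx', piF_apply]
      rcases Bool.eq_false_or_eq_true (w x) with hw | hw
      · rw [hw]
        exact decide_eq_true (Finset.mem_image_of_mem _ (Finset.mem_filter.mpr ⟨hx, hw⟩))
      · rw [hw]
        simp only [decide_eq_false_iff_not, hF, Finset.mem_image, Finset.mem_filter]
        rintro ⟨x', ⟨hx'τ, hwx'⟩, hxeq⟩
        have : x' = x := hres (ℓ₀ + ℓ) (Nat.le_add_right _ _) x' hx'τ x hx hxeq
        rw [this] at hwx'; rw [hwx'] at hw; exact Bool.noConfusion hw
    apply Set.infinite_of_injective_forall_mem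
      (f := fun ℓ : ℕ => piE.symm (ℓ₀ + ℓ, F (ℓ₀ + ℓ)))
    · intro a b hab
      have h1 := piE.symm.injective hab
      have h2 : ℓ₀ + a = ℓ₀ + b := congr_arg Prod.fst h1
      omega
    · exact hmem
end

section
/- Let f : 2^ω → 2^ω be a homeomorphism, let J ⊆ 2^ω be a non-principal maximal ideal on ω, and let D be a countable dense subset of J. Then f restricts to a homeomorphism of J onto J if and only if the closure of {d + f(d) : d ∈ D} (in 2^ω, with + denoting symmetric difference) is contained in J. -/
/-- Coordinatewise addition mod 2 (symmetric difference) on `2^ω`. -/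
def xadd (x y : ℕ → Bool) : ℕ → Bool := fun n => xor (x n) (y n)

theorem homeo_restricts_to_maximal_ideal_iff
    (f : (ℕ → Bool) ≃ₜ (ℕ → Bool)) (J : Set (ℕ → Bool))
    (hdown : ∀ x ∈ J, ∀ y : ℕ → Bool, (∀ n, y n = true → x n = true) → y ∈ J)
    (hunion : ∀ x ∈ J, ∀ y ∈ J, (fun n => x n || y n) ∈ J)
    (hproper : (fun _ => true) ∉ J)
    (hmax : ∀ x : ℕ → Bool, x ∈ J ∨ (fun n => !(x n)) ∈ J)
    (hnonpr : ∀ x : ℕ → Bool, {n | x n = true}.Finite → x ∈ J)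
    (D : Set (ℕ → Bool)) (hDJ : D ⊆ J) (hDcount : D.Countable)
    (hDdense : J ⊆ closure D) :
    f '' J = J ↔ closure {z | ∃ d ∈ D, z = xadd d (f d)} ⊆ J := by
  have hsum : ∀ x ∈ J, ∀ y ∈ J, xadd x y ∈ J := by
    intro x hx y hy
    refine hdown _ (hunion x hx y hy) _ ?_
    intro n hn
    simp only [xadd] at hn ⊢
    cases hx' : x n <;> cases hy' : y n <;> simp_all
  set g : (ℕ → Bool) → (ℕ → Bool) := fun x => xadd x (f x) with hg
  have hgc : Continuous g := by
    apply continuous_pi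
    intro n
    have h1 : Continuous fun p : Bool × Bool => xor p.1 p.2 :=
      continuous_of_discreteTopology
    exact h1.comp ((continuous_apply n).prodMk ((continuous_apply n).comp f.continuous))
  have hS : {z | ∃ d ∈ D, z = xadd d (f d)} = g '' D := by
    ext z
    constructor
    · rintro ⟨d, hd, rfl⟩; exact ⟨d, hd, rfl⟩
    · rintro ⟨d, hd, rfl⟩; exact ⟨d, hd, rfl⟩
  -- every point is in the closure of D
  have hclD : ∀ x : ℕ → Bool, x ∈ closure D := by
    have hJ : ∀ x : ℕ → Bool, x ∈ closure J := by
      intro x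
      have htend : Filter.Tendsto (fun k : ℕ => fun n => if n < k then x n else false)
          Filter.atTop (nhds x) := by
        rw [tendsto_pi_nhds]
        intro n
        refine tendsto_const_nhds.congr' ?_
        filter_upwards [Filter.eventually_ge_atTop (n+1)] with k hk
        simp [Nat.lt_of_lt_of_le (Nat.lt_succ_self n) hk]
      refine mem_closure_of_tendsto htend ?_
      filter_upwards with k
      apply hnonpr
      apply Set.Finite.subset (Set.finite_Iio k)
      intro n hn
      simp only [Set.mem_setOf_eq] at hn
      by_cases h : n < k
      · exact h
      · simp [h] at hn
    intro x
    exact closure_minimal hDdense isClosed_closure (hJ x)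
  constructor
  · intro h
    have hfJ : ∀ x ∈ J, f x ∈ J := by
      intro x hx
      rw [← h]; exact Set.mem_image_of_mem f hx
    have hfnJ : ∀ x, x ∉ J → f x ∉ J := by
      intro x hx hfx
      rw [← h] at hfx
      obtain ⟨x', hx', he⟩ := hfx
      exact hx (f.injective he ▸ hx')
    have hgJ : ∀ x, g x ∈ J := by
      intro x
      by_cases hx : x ∈ J
      · exact hsum _ hx _ (hfJ x hx)
      · have h1 : (fun n => !(x n)) ∈ J := (hmax x).resolve_left hx
        have h2 : (fun n => !(f x n)) ∈ J := (hmax (f x)).resolve_left (hfnJ x hx)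
        have h3 := hsum _ h1 _ h2
        have : g x = xadd (fun n => !(x n)) (fun n => !(f x n)) := by
          funext n
          simp only [hg, xadd]
          cases x n <;> cases f x n <;> rfl
        rw [this]; exact h3
    intro z hz
    have hz' : z ∈ Set.range g := by
      refine closure_minimal ?_ (isCompact_range hgc).isClosed hz
      rw [hS]; exact Set.image_subset_range g D
    obtain ⟨x, rfl⟩ := hz'
    exact hgJ x
  · intro h
    have hgJ : ∀ x, g x ∈ J := by
      intro x
      apply h
      rw [hS]
      exact image_closure_subset_closure_image hgc (Set.mem_image_of_mem g (hclD x))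
    apply Set.eq_of_subset_of_subset
    · rintro y ⟨x, hx, rfl⟩
      refine hdown _ (hunion x hx (g x) (hgJ x)) _ ?_
      intro n hn
      simp only [hg, xadd]
      cases hx' : x n <;> simp_all
    · intro y hy
      refine ⟨f.symm y, ?_, f.apply_symm_apply y⟩
      have hgy : g (f.symm y) ∈ J := hgJ (f.symm y)
      have hfy : f (f.symm y) = y := f.apply_symm_apply y
      refine hdown _ (hunion y hy (g (f.symm y)) hgy) _ ?_
      intro n hn
      simp only [hg, xadd, hfy]
      cases hy' : y n <;> simp_all
end

section
/- Let f : (2^ω)^ω → (2^ω)^ω be a homeomorphism, let J ⊆ 2^ω be a non-principal maximal ideal on ω, and let D be a countable dense subset of J^ω. If the closure of {d + f(d) : d ∈ D} is contained in J^ω (with + being coordinatewise symmetric difference), then f restricts to a homeomorphism of J^ω onto J^ω. -/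
theorem homeo_restricts_to_ideal_power
    (f : (ℕ → ℕ → Bool) ≃ₜ (ℕ → ℕ → Bool)) (J : Set (ℕ → Bool))
    (hdown : ∀ x ∈ J, ∀ y : ℕ → Bool, (∀ n, y n = true → x n = true) → y ∈ J)
    (hunion : ∀ x ∈ J, ∀ y ∈ J, (fun n => x n || y n) ∈ J)
    (hproper : (fun _ => true) ∉ J)
    (hmax : ∀ x : ℕ → Bool, x ∈ J ∨ (fun n => !(x n)) ∈ J)
    (hnonpr : ∀ x : ℕ → Bool, {n | x n = true}.Finite → x ∈ J)
    (D : Set (ℕ → ℕ → Bool)) (hDJ : D ⊆ {x | ∀ i, x i ∈ J}) (hDcount : D.Countable)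
    (hDdense : {x : ℕ → ℕ → Bool | ∀ i, x i ∈ J} ⊆ closure D)
    (hcl : closure {z | ∃ d ∈ D, z = fun i => xadd (d i) (f d i)} ⊆
      {x : ℕ → ℕ → Bool | ∀ i, x i ∈ J}) :
    f '' {x : ℕ → ℕ → Bool | ∀ i, x i ∈ J} = {x : ℕ → ℕ → Bool | ∀ i, x i ∈ J} := by
  -- J is closed under symmetric difference
  have hxadd : ∀ a ∈ J, ∀ b ∈ J, xadd a b ∈ J := by
    intro a ha b hb
    apply hdown _ (hunion a ha b hb)
    intro n hn
    cases h1 : a n <;> cases h2 : b n <;> simp_all [xadd]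
  -- cancellation identities
  have hcanc : ∀ a b : ℕ → Bool, xadd a (xadd a b) = b := by
    intro a b; funext n
    cases h1 : a n <;> cases h2 : b n <;> simp [xadd, h1, h2]
  have hcanc2 : ∀ a b : ℕ → Bool, xadd b (xadd a b) = a := by
    intro a b; funext n
    cases h1 : a n <;> cases h2 : b n <;> simp [xadd, h1, h2]
  -- J^ω is dense
  have hdense : ∀ x : ℕ → ℕ → Bool, x ∈ closure {x : ℕ → ℕ → Bool | ∀ i, x i ∈ J} := by
    intro x
    have htend : Filter.Tendsto
        (fun k : ℕ => fun i n => if i < k ∧ n < k then x i n else false)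
        Filter.atTop (nhds x) := by
      rw [tendsto_pi_nhds]; intro i
      rw [tendsto_pi_nhds]; intro n
      refine Filter.Tendsto.congr' ?_ (tendsto_const_nhds (x := x i n))
      filter_upwards [Filter.eventually_gt_atTop (max i n)] with k hk
      simp [lt_of_le_of_lt (le_max_left i n) hk, lt_of_le_of_lt (le_max_right i n) hk]
    refine mem_closure_of_tendsto htend ?_
    filter_upwards with k
    intro i
    apply hnonpr
    apply Set.Finite.subset (Set.finite_lt_nat k)
    intro n hn
    simp only [Set.mem_setOf_eq] at hn
    by_contra h
    simp only [Set.mem_setOf_eq, not_lt] at h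
    rw [if_neg (by omega)] at hn
    exact Bool.false_ne_true hn
  -- closure D is everything
  have hDall : ∀ x : ℕ → ℕ → Bool, x ∈ closure D := by
    intro x
    have := closure_minimal hDdense isClosed_closure
    exact this (hdense x)
  -- the map g x = x + f x is continuous
  have hg : Continuous (fun x : ℕ → ℕ → Bool => fun i => xadd (x i) (f x i)) := by
    refine continuous_pi fun i => continuous_pi fun n => ?_
    have h1 : Continuous fun x : ℕ → ℕ → Bool => x i n :=
      (continuous_apply n).comp (continuous_apply i)
    have h2 : Continuous fun x : ℕ → ℕ → Bool => f x i n :=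
      (continuous_apply n).comp ((continuous_apply i).comp f.continuous)
    show Continuous fun x : ℕ → ℕ → Bool => xor (x i n) (f x i n)
    have hx2 : Continuous fun p : Bool × Bool => xor p.1 p.2 :=
      continuous_of_discreteTopology
    exact hx2.comp (h1.prodMk h2)
  -- key fact: for every x, x + f x ∈ J^ω
  have hkey : ∀ x : ℕ → ℕ → Bool, ∀ i, xadd (x i) (f x i) ∈ J := by
    intro x
    have hmem : (fun i => xadd (x i) (f x i)) ∈
        closure {z | ∃ d ∈ D, z = fun i => xadd (d i) (f d i)} :=
      map_mem_closure hg (hDall x) (fun d hd => ⟨d, hd, rfl⟩)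
    exact hcl hmem
  ext y
  constructor
  · rintro ⟨x, hx, rfl⟩
    intro i
    have h := hxadd _ (hx i) _ (hkey x i)
    rwa [hcanc] at h
  · intro hy
    refine ⟨f.symm y, ?_, f.apply_symm_apply y⟩
    intro i
    have hk := hkey (f.symm y) i
    rw [f.apply_symm_apply] at hk
    have h := hxadd _ (hy i) _ hk
    rwa [hcanc2] at h
end

section
/- Every ultrafilter U on ω, viewed as a subspace of 2^ω, has the separation property: for every countable A ⊆ U and every meager B ⊆ U, there is a homeomorphism f : U → U with f[A] ∩ B = ∅. -/
namespace SepAux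

open Set Filter Topology

lemma isMeagre_iUnion' {X : Type*} [TopologicalSpace X] {ι : Sort*} [Countable ι]
    {s : ι → Set X} (hs : ∀ i, IsMeagre (s i)) : IsMeagre (⋃ i, s i) := by
  rw [IsMeagre, compl_iUnion]
  exact countable_iInter_mem.mpr hs

lemma isMeagre_union {X : Type*} [TopologicalSpace X] {s t : Set X}
    (hs : IsMeagre s) (ht : IsMeagre t) : IsMeagre (s ∪ t) := by
  rw [IsMeagre, compl_union]; exact inter_mem hs ht

lemma isNowhereDense_image {X : Type*} [TopologicalSpace X] {S : Set X} (hS : Dense S)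
    {A : Set ↥S} (hA : IsNowhereDense A) : IsNowhereDense (((↑) : ↥S → X) '' A) := by
  rw [IsNowhereDense, eq_empty_iff_forall_notMem]
  intro x hx
  obtain ⟨s, hsi, hsS⟩ := hS.inter_open_nonempty _ isOpen_interior ⟨x, hx⟩
  have hmem : (⟨s, hsS⟩ : ↥S) ∈ interior (closure A) := by
    apply mem_interior.mpr
    refine ⟨((↑) : ↥S → X) ⁻¹' interior (closure (((↑) : ↥S → X) '' A)), ?_, ?_, hsi⟩
    · intro t ht
      exact closure_subtype.mpr (interior_subset ht)
    · exact isOpen_interior.preimage continuous_subtype_val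
  rw [hA] at hmem
  exact hmem

lemma isMeagre_of_dense_of_meagre_univ {X : Type*} [TopologicalSpace X] {S : Set X}
    (hS : Dense S) (h : IsMeagre (univ : Set ↥S)) : IsMeagre S := by
  obtain ⟨𝒮, h𝒮, hc, hsub⟩ := isMeagre_iff_countable_union_isNowhereDense.mp h
  rw [isMeagre_iff_countable_union_isNowhereDense]
  refine ⟨(fun A => ((↑) : ↥S → X) '' A) '' 𝒮, ?_, hc.image _, ?_⟩
  · rintro t ⟨A, hA, rfl⟩
    exact isNowhereDense_image hS (h𝒮 A hA)
  · intro x hx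
    obtain ⟨A, hA, hxA⟩ := hsub (mem_univ (⟨x, hx⟩ : ↥S))
    exact ⟨((↑) : ↥S → X) '' A, mem_image_of_mem _ hA, ⟨⟨x, hx⟩, hxA, rfl⟩⟩

variable (U : Ultrafilter ℕ)

def idealSet : Set (ℕ → Bool) := {x | {n | x n = true} ∉ U}

def xorFun (g x : ℕ → Bool) : ℕ → Bool := fun n => xor (x n) (g n)

lemma xorFun_invol (g x : ℕ → Bool) : xorFun g (xorFun g x) = x := by
  funext n; simp [xorFun]

lemma continuous_xorFun_sub (g : ℕ → Bool) {S : Set (ℕ → Bool)} :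
    Continuous fun x : ↥S => xorFun g x.1 := by
  apply continuous_pi
  intro n
  exact (continuous_of_discreteTopology (f := fun b => xor b (g n))).comp
    ((continuous_apply n).comp continuous_subtype_val)

variable {U}

lemma notMem_of_subset {s t : Set ℕ} (h : s ⊆ t) (ht : t ∉ U) : s ∉ U :=
  fun hs => ht (U.toFilter.mem_of_superset hs h)

lemma xor_mem_toCantorSet {x g : ℕ → Bool} (hx : x ∈ toCantorSet U) (hg : g ∈ idealSet U) :
    xorFun g x ∈ toCantorSet U := by
  have h1 : {n | g n = true}ᶜ ∈ U := Ultrafilter.compl_mem_iff_notMem.mpr hg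
  refine U.toFilter.mem_of_superset (inter_mem hx h1) ?_
  rintro n ⟨hxn, hgn⟩
  have hg' : g n = false := by simpa using hgn
  simp only [mem_setOf_eq] at hxn ⊢
  simp [xorFun, hxn, hg']

lemma xor_mem_idealSet_of_two_mem {x y : ℕ → Bool} (hx : x ∈ toCantorSet U)
    (hy : y ∈ toCantorSet U) : xorFun y x ∈ idealSet U := by
  have hsub : {n | xorFun y x n = true} ⊆ ({n | x n = true} ∩ {n | y n = true})ᶜ := by
    intro n hn
    simp only [mem_compl_iff, mem_inter_iff, mem_setOf_eq, not_and]
    intro h1 h2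
    simp only [mem_setOf_eq, xorFun, h1, h2] at hn
    simp at hn
  exact notMem_of_subset hsub (Ultrafilter.compl_mem_iff_notMem.mp
    (by simpa using Ultrafilter.compl_notMem_iff.mpr (inter_mem hx hy)))

lemma xor_mem_idealSet {x g : ℕ → Bool} (hx : x ∈ idealSet U) (hg : g ∈ idealSet U) :
    xorFun g x ∈ idealSet U := by
  have hsub : {n | xorFun g x n = true} ⊆ {n | x n = true} ∪ {n | g n = true} := by
    intro n hn
    simp only [mem_setOf_eq, xorFun] at hn
    simp only [mem_union, mem_setOf_eq]
    cases hx1 : x n with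
    | false =>
      cases hg1 : g n with
      | false => rw [hx1, hg1] at hn; simp at hn
      | true => exact Or.inr rfl
    | true => exact Or.inl rfl
  refine notMem_of_subset hsub ?_
  rw [Ultrafilter.union_mem_iff]
  rintro (h | h)
  · exact hx h
  · exact hg h

/-- xor by `g` as a homeomorphism between two subsets of Cantor space. -/
def xorHomeo (g : ℕ → Bool) (S T : Set (ℕ → Bool))
    (hST : ∀ x ∈ S, xorFun g x ∈ T) (hTS : ∀ x ∈ T, xorFun g x ∈ S) : ↥S ≃ₜ ↥T where
  toFun x := ⟨xorFun g x.1, hST _ x.2⟩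
  invFun y := ⟨xorFun g y.1, hTS _ y.2⟩
  left_inv x := Subtype.ext (xorFun_invol g x.1)
  right_inv y := Subtype.ext (xorFun_invol g y.1)
  continuous_toFun := (continuous_xorFun_sub g).subtype_mk _
  continuous_invFun := (continuous_xorFun_sub g).subtype_mk _

lemma false_mem_idealSet : (fun _ => false : ℕ → Bool) ∈ idealSet U := by
  show {n : ℕ | false = true} ∉ U
  convert U.toFilter.empty_notMem using 2
  simp

instance : Nonempty ↥(idealSet U) := ⟨⟨_, false_mem_idealSet⟩⟩

section Nonprincipal

variable (hU : (U : Filter ℕ) ≤ Filter.cofinite)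

include hU

lemma finite_notMem {s : Set ℕ} (hs : s.Finite) : s ∉ U := fun h =>
  Ultrafilter.compl_notMem_iff.mpr h (hU hs.compl_mem_cofinite)

lemma dense_idealSet : Dense (idealSet U) := by
  rw [dense_iff_inter_open]
  rintro u hu ⟨f, hf⟩
  obtain ⟨I, v, hv, hsub⟩ := isOpen_pi_iff.mp hu f hf
  set y : ℕ → Bool := fun n => if n ∈ I then f n else false with hy
  refine ⟨y, hsub ?_, ?_⟩
  · intro a ha
    have haI := Finset.mem_coe.mp ha
    simp only [hy, if_pos haI]
    exact (hv a haI).2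
  · refine finite_notMem hU (Set.Finite.subset I.finite_toSet ?_)
    intro n hn
    simp only [mem_setOf_eq, hy] at hn
    rcases Decidable.em (n ∈ I) with h | h
    · exact Finset.mem_coe.mpr h
    · simp [h] at hn

/-- the pointwise-negation homeomorphism of Cantor space. -/
def negHomeo : (ℕ → Bool) ≃ₜ (ℕ → Bool) where
  toFun x := fun n => !(x n)
  invFun x := fun n => !(x n)
  left_inv x := by funext n; simp
  right_inv x := by funext n; simp
  continuous_toFun := continuous_pi fun n =>
    (continuous_of_discreteTopology (f := fun b => !b)).comp (continuous_apply n)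
  continuous_invFun := continuous_pi fun n =>
    (continuous_of_discreteTopology (f := fun b => !b)).comp (continuous_apply n)

omit hU in
lemma neg_preimage : (⇑negHomeo) ⁻¹' idealSet U = toCantorSet U := by
  ext x
  have hset : {n | (!(x n)) = true} = {n | x n = true}ᶜ := by
    ext n; simp
  show {n | (!(x n)) = true} ∉ U ↔ _
  rw [hset]
  exact Ultrafilter.compl_notMem_iff

omit hU in
lemma not_isMeagre_idealSet : ¬ IsMeagre (idealSet U) := by
  intro h
  have hpre : IsMeagre (toCantorSet U) := by
    rw [← neg_preimage]
    exact h.preimage_of_isOpenMap negHomeo.continuous negHomeo.isOpenMap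
  have huniv : IsMeagre (univ : Set (ℕ → Bool)) := by
    have : (univ : Set (ℕ → Bool)) = idealSet U ∪ toCantorSet U := by
      ext x
      simp only [mem_univ, true_iff, mem_union]
      exact (Classical.em _).symm.imp id id
    rw [this]
    exact isMeagre_union h hpre
  have : Dense (∅ : Set (ℕ → Bool)) := by
    have h2 : (univ : Set (ℕ → Bool))ᶜ ∈ residual _ := huniv
    rw [compl_univ] at h2
    exact dense_of_mem_residual h2
  rcases this.nonempty with ⟨x, hx⟩
  exact hx

lemma baireSpace_idealSet_nonprincipal : BaireSpace ↥(idealSet U) := by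
  constructor
  intro f ho hd
  rw [dense_iff_inter_open]
  rintro u hu hune
  by_contra hne
  have husub : u ⊆ (⋂ n, f n)ᶜ := by
    intro x hx
    simp only [mem_compl_iff, mem_iInter, not_forall]
    by_contra hc
    push_neg at hc
    exact hne ⟨x, hx, mem_iInter.mpr hc⟩
  have hM : IsMeagre ((⋂ n, f n)ᶜ) := by
    show _ ∈ residual _
    rw [compl_compl]
    exact countable_iInter_mem.mpr fun n => residual_of_dense_open (ho n) (hd n)
  have humeagre : IsMeagre u := hM.mono husub
  -- translate the open meagre set to cover the whole group
  obtain ⟨g₀, hg₀⟩ := hune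
  have hcover : ∀ x : ↥(idealSet U), ∃ V : Set ↥(idealSet U),
      IsOpen V ∧ x ∈ V ∧ IsMeagre V := by
    intro x
    set w : ℕ → Bool := xorFun g₀.1 x.1 with hw
    have hwI : w ∈ idealSet U := xor_mem_idealSet x.2 g₀.2
    set T := xorHomeo w (idealSet U) (idealSet U)
      (fun y hy => xor_mem_idealSet hy hwI) (fun y hy => xor_mem_idealSet hy hwI) with hT
    refine ⟨⇑T ⁻¹' u, hu.preimage T.continuous, ?_, ?_⟩
    · show (⟨xorFun w x.1, _⟩ : ↥(idealSet U)) ∈ u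
      have : xorFun w x.1 = g₀.1 := by
        funext n
        simp only [xorFun, hw]
        cases hx1 : x.1 n <;> cases hg1 : g₀.1 n <;> rfl
      simp only [this]
      exact hg₀
    · exact humeagre.preimage_of_isOpenMap T.continuous T.isOpenMap
  choose V hVo hVx hVm using hcover
  obtain ⟨Tc, hTc, hTeq⟩ := TopologicalSpace.isOpen_iUnion_countable V hVo
  have huniv : IsMeagre (univ : Set ↥(idealSet U)) := by
    have h1 : (univ : Set ↥(idealSet U)) = ⋃ x ∈ Tc, V x := by
      rw [hTeq]
      exact (eq_univ_iff_forall.mpr fun x => mem_iUnion.mpr ⟨x, hVx x⟩).symm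
    rw [h1, biUnion_eq_iUnion]
    haveI := hTc.to_subtype
    exact isMeagre_iUnion' fun i => hVm i.1
  exact not_isMeagre_idealSet
    (isMeagre_of_dense_of_meagre_univ (dense_idealSet hU) huniv)

end Nonprincipal

lemma baireSpace_idealSet : BaireSpace ↥(idealSet U) := by
  rcases U.le_cofinite_or_eq_pure with hU | ⟨a, ha⟩
  · exact baireSpace_idealSet_nonprincipal hU
  · -- principal case: the ideal is a closed subset of Cantor space
    have hclosed : IsClosed (idealSet U) := by
      have : idealSet U = (fun x : ℕ → Bool => x a) ⁻¹' {false} := by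
        ext x
        show {n | x n = true} ∉ U ↔ _
        rw [ha]
        simp only [mem_preimage, mem_singleton_iff]
        constructor
        · intro h
          cases h' : x a with
          | false => rfl
          | true => exact absurd (show a ∈ {n | x n = true} from h') h
        · intro h hmem
          have : x a = true := hmem
          rw [h] at this
          exact Bool.false_ne_true this
      rw [this]
      exact (isClosed_discrete _).preimage (continuous_apply a)
    haveI : CompactSpace ↥(idealSet U) := isCompact_iff_compactSpace.mp hclosed.isCompact
    haveI : LocallyCompactSpace ↥(idealSet U) := inferInstance
    infer_instance

end SepAux

open SepAux Set in
theorem ultrafilter_separation_property (U : Ultrafilter ℕ) :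
    ∀ A : Set ↥(toCantorSet U), A.Countable →
      ∀ B : Set ↥(toCantorSet U), IsMeagre B →
        ∃ h : ↥(toCantorSet U) ≃ₜ ↥(toCantorSet U), (h '' A) ∩ B = ∅ := by
  intro A hA B hB
  haveI : BaireSpace ↥(idealSet U) := baireSpace_idealSet
  -- for each a ∈ A, the homeomorphism g ↦ a + g from the ideal to the ultrafilter
  set φ : ↥(toCantorSet U) → (↥(idealSet U) ≃ₜ ↥(toCantorSet U)) := fun a =>
    xorHomeo a.1 (idealSet U) (toCantorSet U)
      (fun x hx => by
        have := xor_mem_toCantorSet a.2 hx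
        have hcomm : xorFun a.1 x = xorFun x a.1 := by
          funext n; simp [xorFun, Bool.xor_comm]
        rwa [hcomm])
      (fun x hx => xor_mem_idealSet_of_two_mem hx a.2) with hφ
  haveI : Countable ↥A := hA.to_subtype
  set T : Set ↥(idealSet U) := ⋃ a : ↥A, ⇑(φ a.1) ⁻¹' B with hT
  have hTm : IsMeagre T :=
    isMeagre_iUnion' fun a => hB.preimage_of_isOpenMap (φ a.1).continuous (φ a.1).isOpenMap
  have hdense : Dense Tᶜ := dense_of_mem_residual hTm
  obtain ⟨g, hg⟩ := hdense.nonempty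
  refine ⟨xorHomeo g.1 (toCantorSet U) (toCantorSet U)
    (fun x hx => xor_mem_toCantorSet hx g.2) (fun x hx => xor_mem_toCantorSet hx g.2), ?_⟩
  rw [eq_empty_iff_forall_notMem]
  rintro y ⟨⟨a, haA, rfl⟩, hyB⟩
  apply hg
  rw [hT]
  refine mem_iUnion.mpr ⟨⟨a, haA⟩, ?_⟩
  show φ a g ∈ B
  have : φ a g = xorHomeo g.1 (toCantorSet U) (toCantorSet U)
      (fun x hx => xor_mem_toCantorSet hx g.2) (fun x hx => xor_mem_toCantorSet hx g.2) a := by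
    apply Subtype.ext
    show xorFun a.1 g.1 = xorFun g.1 a.1
    funext n; simp [xorFun, Bool.xor_comm]
  rw [this]
  exact hyB
end
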